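/- For every real κ with 1 < κ ≤ 2 and every vector w ∈ ℝ⁵ satisfying ⟨w, w⟩ = 1, ⟨w_x, w⟩ = −1, ⟨w_c, w⟩ = −1, ⟨w_f, w⟩ = −1, ⟨w_c*, w⟩ = 1 and ⟨w_z, w⟩ = √(3 + 2√κ − κ), the reflected bridge-ball vector w' := w − 2⟨w, w_c*⟩ w_c* satisfies: ⟨w_x, w'⟩ = −1, ⟨w_{-c}, w'⟩ = −1, ⟨w_f, w'⟩ = −1 (tangencies), ⟨w_c, w'⟩ = −1 − 2√κ < −1 and ⟨w_{-f}, w'⟩ = 3 − 4/√κ − 8/κ < −1 (disjointness), and ⟨w_t, w'⟩ = (2 + 2√κ − κ)/√(4 + κ²) ≥ 1 (containment in the tangency ball). -/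

import Mathlib

noncomputable section

/-- The Lorentzian product on ℝ⁵: ⟨u,v⟩ = u₁v₁ + u₂v₂ + u₃v₃ + u₄v₄ − u₅v₅. -/
def lprod5 (u v : Fin 5 → ℝ) : ℝ :=
  u 0 * v 0 + u 1 * v 1 + u 2 * v 2 + u 3 * v 3 - u 4 * v 4

/-- Inversive coordinates of the blow-ups to ℝ³ of the standard pyramidal disk
packing, its mirror and tangency disks, and the half-space `{z ≥ 0}`. -/
def wx : Fin 5 → ℝ := ![0, -1, 0, 1, 1]
def wc (κ : ℝ) : Fin 5 → ℝ := ![0, 1 - κ, 0, -1, κ - 1]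
def wf (κ : ℝ) : Fin 5 → ℝ := ![2 / Real.sqrt κ, 0, 0, 2 / κ - 1, 2 / κ]
def wmc : Fin 5 → ℝ := ![0, 1, 0, 1, 1]
def wmf (κ : ℝ) : Fin 5 → ℝ := ![-(2 / Real.sqrt κ), 0, 0, 2 / κ - 1, 2 / κ]
def wcs (κ : ℝ) : Fin 5 → ℝ :=
  ![0, -(Real.sqrt κ / 2), 0, -(1 / Real.sqrt κ), (κ - 2) / (2 * Real.sqrt κ)]
def wt (κ : ℝ) : Fin 5 → ℝ :=
  ![0, -(2 / Real.sqrt (κ ^ 2 + 4)), 0, κ / Real.sqrt (κ ^ 2 + 4), 0]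
def wz : Fin 5 → ℝ := ![0, 0, 1, 0, 0]

/-!
The four tangency conditions are linear in `w` and determine every coordinate of `w` except
the third, which none of `w_x`, `w_{±c}`, `w_{±f}`, `w_c*`, `w_t` involves. Since `w_c*` is orthogonal to `w_x`,
`w_f`, `w_{-f}` and `w_t`, reflecting in it leaves those products unchanged and only moves the
products with `w_c` and `w_{-c}`, by `∓ 2√κ`. The two inequalities reduce to `κ ≤ 2`: for the
last one, `(2 + 2√κ - κ)² - (4 + κ²) = 4√κ (2 - κ)`.
-/

theorem lprod5_comm (u v : Fin 5 → ℝ) : lprod5 u v = lprod5 v u := by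
  unfold lprod5
  ring

theorem lprod5_sub_smul (v w u : Fin 5 → ℝ) (t : ℝ) :
    lprod5 v (w - t • u) = lprod5 v w - t * lprod5 v u := by
  simp only [lprod5, Pi.sub_apply, Pi.smul_apply, smul_eq_mul]
  ring

section ProductsWithMirror

variable {κ : ℝ} (hκ : 0 < κ)
include hκ

theorem lprod5_wx_wcs : lprod5 wx (wcs κ) = 0 := by
  have : 0 < √κ := by positivity
  simp [lprod5, wx, wcs]
  field_simp
  linear_combination Real.sq_sqrt hκ.le

theorem lprod5_wmc_wcs : lprod5 wmc (wcs κ) = -√κ := by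
  have : 0 < √κ := by positivity
  simp [lprod5, wmc, wcs]
  field_simp
  linear_combination Real.sq_sqrt hκ.le

theorem lprod5_wc_wcs : lprod5 (wc κ) (wcs κ) = √κ := by
  have : 0 < √κ := by positivity
  simp [lprod5, wc, wcs]
  field_simp
  linear_combination (κ - 3) * Real.sq_sqrt hκ.le

theorem lprod5_wf_wcs : lprod5 (wf κ) (wcs κ) = 0 := by
  have : 0 < √κ := by positivity
  simp [lprod5, wf, wcs]
  field_simp
  ring

theorem lprod5_wmf_wcs : lprod5 (wmf κ) (wcs κ) = 0 := by
  have : 0 < √κ := by positivity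
  simp [lprod5, wmf, wcs]
  field_simp
  ring

theorem lprod5_wt_wcs : lprod5 (wt κ) (wcs κ) = 0 := by
  have : 0 < √κ := by positivity
  simp [lprod5, wt, wcs]
  field_simp
  linear_combination Real.sq_sqrt hκ.le

end ProductsWithMirror

structure IsBridgeBall (κ : ℝ) (w : Fin 5 → ℝ) : Prop where
  tangent_wx : lprod5 wx w = -1
  tangent_wc : lprod5 (wc κ) w = -1
  tangent_wf : lprod5 (wf κ) w = -1
  internallyTangent_wcs : lprod5 (wcs κ) w = 1

namespace IsBridgeBall

variable {κ : ℝ} {w : Fin 5 → ℝ} (hκ : 0 < κ) (h : IsBridgeBall κ w)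
include hκ h

theorem coords :
    w 0 = 1 + 2 / √κ - √κ ∧ w 1 = -√κ ∧ w 3 = 2 / κ - 1 ∧ w 4 = 2 / κ + √κ := by
  obtain ⟨s, hs, rfl⟩ : ∃ s, 0 < s ∧ κ = s ^ 2 :=
    ⟨√κ, by positivity, (Real.sq_sqrt hκ.le).symm⟩
  obtain ⟨hx, hc, hf, hcs⟩ := h
  simp [lprod5, wx, wc, wf, wcs, Real.sqrt_sq hs.le] at hx hc hf hcs
  field_simp at hcs
  have h1 : w 1 = -s := by
    linear_combination -(1 / 2) * hx + (1 / 2) * hc - (1 / 2) * hcs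
  have h3 : w 3 = 2 / s ^ 2 - 1 := by
    field_simp
    linear_combination (s ^ 2 - 1) * hx - hc
  have h4 : w 4 = 2 / s ^ 2 + s := by
    field_simp
    linear_combination -hx - hc - s ^ 2 * h1
  have h0 : w 0 = 1 + 2 / s - s := by
    rw [h3, h4] at hf
    field_simp at hf ⊢
    refine mul_left_cancel₀ (pow_ne_zero 2 hs.ne') ?_
    linear_combination hf / 2
  rw [Real.sqrt_sq hs.le]
  exact ⟨h0, h1, h3, h4⟩

theorem lprod5_wmc : lprod5 wmc w = -1 - 2 * √κ := by
  obtain ⟨-, h1, h3, h4⟩ := h.coords hκ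
  simp [lprod5, wmc, h1, h3, h4]
  ring

theorem lprod5_wmf : lprod5 (wmf κ) w = 3 - 4 / √κ - 8 / κ := by
  obtain ⟨h0, h1, h3, h4⟩ := h.coords hκ
  have : 0 < √κ := by positivity
  simp [lprod5, wmf, h0, h1, h3, h4]
  field_simp
  linear_combination (4 * κ - 2 * κ * √κ) * Real.sq_sqrt hκ.le

theorem lprod5_wt : lprod5 (wt κ) w = (2 + 2 * √κ - κ) / √(4 + κ ^ 2) := by
  obtain ⟨h0, h1, h3, h4⟩ := h.coords hκ
  simp [lprod5, wt, h0, h1, h3, h4, add_comm (κ ^ 2)]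
  field_simp
  ring

end IsBridgeBall

theorem three_sub_div_sqrt_sub_div_lt {κ : ℝ} (hκ : 0 < κ) (hκ2 : κ ≤ 2) :
    3 - 4 / √κ - 8 / κ < -1 := by
  have h8 : 4 ≤ 8 / κ := by rw [le_div_iff₀ hκ]; linarith
  have h4 : 0 < 4 / √κ := by positivity
  linarith

theorem one_le_div_sqrt_four_add_sq {κ : ℝ} (hκ : 0 ≤ κ) (hκ2 : κ ≤ 2) :
    1 ≤ (2 + 2 * √κ - κ) / √(4 + κ ^ 2) := by
  have hs := Real.sq_sqrt hκ
  have hs0 := Real.sqrt_nonneg κ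
  have hnum : 0 ≤ 2 + 2 * √κ - κ := by linarith
  rw [one_le_div (by positivity), Real.sqrt_le_left hnum]
  nlinarith [mul_nonneg hs0 (sub_nonneg.2 hκ2)]

theorem reflected_bridge_ball_products_general (κ : ℝ) (hκ1 : 1 < κ) (hκ2 : κ ≤ 2)
    (w : Fin 5 → ℝ)
    (hx : lprod5 wx w = -1) (hc : lprod5 (wc κ) w = -1)
    (hf : lprod5 (wf κ) w = -1) (hcs : lprod5 (wcs κ) w = 1) :
    lprod5 wx (w - (2 * lprod5 w (wcs κ)) • wcs κ) = -1 ∧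
    lprod5 wmc (w - (2 * lprod5 w (wcs κ)) • wcs κ) = -1 ∧
    lprod5 (wf κ) (w - (2 * lprod5 w (wcs κ)) • wcs κ) = -1 ∧
    lprod5 (wc κ) (w - (2 * lprod5 w (wcs κ)) • wcs κ) = -1 - 2 * Real.sqrt κ ∧
    -1 - 2 * Real.sqrt κ < -1 ∧
    lprod5 (wmf κ) (w - (2 * lprod5 w (wcs κ)) • wcs κ) =
      3 - 4 / Real.sqrt κ - 8 / κ ∧
    3 - 4 / Real.sqrt κ - 8 / κ < -1 ∧
    lprod5 (wt κ) (w - (2 * lprod5 w (wcs κ)) • wcs κ) =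
      (2 + 2 * Real.sqrt κ - κ) / Real.sqrt (4 + κ ^ 2) ∧
    1 ≤ (2 + 2 * Real.sqrt κ - κ) / Real.sqrt (4 + κ ^ 2) := by
  have hκ : 0 < κ := by linarith
  have hw : IsBridgeBall κ w := ⟨hx, hc, hf, hcs⟩
  have hwcs : lprod5 w (wcs κ) = 1 := by rw [lprod5_comm, hcs]
  simp only [lprod5_sub_smul, hwcs, hx, hc, hf, hw.lprod5_wmc hκ, hw.lprod5_wmf hκ,
    hw.lprod5_wt hκ, lprod5_wx_wcs hκ, lprod5_wmc_wcs hκ, lprod5_wc_wcs hκ, lprod5_wf_wcs hκ,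
    lprod5_wmf_wcs hκ, lprod5_wt_wcs hκ]
  refine ⟨by ring, by ring, by ring, by ring, by linarith [Real.sqrt_pos.2 hκ], by ring,
    three_sub_div_sqrt_sub_div_lt hκ hκ2, by ring, one_le_div_sqrt_four_add_sq hκ.le hκ2⟩

/-- For `1 < κ ≤ 2`, the reflected bridge-ball vector `w' = w − 2⟨w, w_c*⟩ w_c*`
is tangent to `b_x`, `b₋c`, `b_f`, disjoint from `b_c` and `b₋f`, and contained
in the tangency ball `b_t`. -/
theorem reflected_bridge_ball_products (κ : ℝ) (hκ1 : 1 < κ) (hκ2 : κ ≤ 2)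
    (w : Fin 5 → ℝ)
    (hww : lprod5 w w = 1) (hx : lprod5 wx w = -1) (hc : lprod5 (wc κ) w = -1)
    (hf : lprod5 (wf κ) w = -1) (hcs : lprod5 (wcs κ) w = 1)
    (hz : lprod5 wz w = Real.sqrt (3 + 2 * Real.sqrt κ - κ)) :
    lprod5 wx (w - (2 * lprod5 w (wcs κ)) • wcs κ) = -1 ∧
    lprod5 wmc (w - (2 * lprod5 w (wcs κ)) • wcs κ) = -1 ∧
    lprod5 (wf κ) (w - (2 * lprod5 w (wcs κ)) • wcs κ) = -1 ∧
    lprod5 (wc κ) (w - (2 * lprod5 w (wcs κ)) • wcs κ) = -1 - 2 * Real.sqrt κ ∧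
    -1 - 2 * Real.sqrt κ < -1 ∧
    lprod5 (wmf κ) (w - (2 * lprod5 w (wcs κ)) • wcs κ) =
      3 - 4 / Real.sqrt κ - 8 / κ ∧
    3 - 4 / Real.sqrt κ - 8 / κ < -1 ∧
    lprod5 (wt κ) (w - (2 * lprod5 w (wcs κ)) • wcs κ) =
      (2 + 2 * Real.sqrt κ - κ) / Real.sqrt (4 + κ ^ 2) ∧
    1 ≤ (2 + 2 * Real.sqrt κ - κ) / Real.sqrt (4 + κ ^ 2) :=
  reflected_bridge_ball_products_general κ hκ1 hκ2 w hx hc hf hcs
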